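/- arXiv:0707.1475 — 2 statements merged into one kernel-verified Lean document; each statement's English description precedes it below -/
import Mathlib

section
/- Let E_{ab} and B_{ab} be symmetric trace-free real 3×3 matrices and let W, t_{ab}, t_{abcd} be the corresponding superenergy quantities. Then the following conditions are equivalent: t_{abcd} = 0; t_{ab} = 0; W = 0; E_{ab} = 0 and B_{ab} = 0. -/
noncomputable section

/-- The Euclidean metric `δ_{ab}` on `ℝ³`. -/
def h3 : Fin 3 → Fin 3 → ℝ := fun a b => if a = b then 1 else 0

/-- The 3-dimensional Levi-Civita symbol with `ε₁₂₃ = 1`. -/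
def eps3 (a b c : Fin 3) : ℝ :=
  ((((b.val : ℤ) - a.val).sign * ((c.val : ℤ) - a.val).sign *
    ((c.val : ℤ) - b.val).sign : ℤ) : ℝ)

/-- A 3×3 array. -/
abbrev Mat3 := Fin 3 → Fin 3 → ℝ

/-- Superenergy density `W = E_{ab} E^{ab} + B_{ab} B^{ab}`. -/
def Wd (E B : Mat3) : ℝ := ∑ a, ∑ b, (E a b * E a b + B a b * B a b)

/-- Super-Poynting vector `𝒫_a = 2 B_p{}^l E_{ql} ε_a{}^{pq}`. -/
def Pd (E B : Mat3) (a : Fin 3) : ℝ := 2 * ∑ p, ∑ q, ∑ l, B p l * E q l * eps3 a p q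

/-- `t_{ab} = W h_{ab} − 2 (B_a{}^c B_{bc} + E_a{}^c E_{bc})`. -/
def td (E B : Mat3) (a b : Fin 3) : ℝ :=
  Wd E B * h3 a b - 2 * ∑ c, (B a c * B b c + E a c * E b c)

/-- `Q_{cdb} = h_{cd} 𝒫_b − 2 (B_{da} E_{cf} + B_{ca} E_{df}) ε_b{}^{af}`. -/
def Qd (E B : Mat3) (c d b : Fin 3) : ℝ :=
  h3 c d * Pd E B b - 2 * ∑ a, ∑ f, (B d a * E c f + B c a * E d f) * eps3 b a f

/-- The fully spatial part `t_{abcd}` of the Bel-Robinson tensor. -/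
def t4d (E B : Mat3) (a b c d : Fin 3) : ℝ :=
  4 * (B a b * B c d + E a b * E c d)
  - h3 c d * td E B a b
  + (h3 b d * td E B c a + h3 b c * td E B d a)
  + (h3 a d * td E B c b + h3 a c * td E B d b)
  - h3 a b * td E B c d
  + Wd E B * (h3 a b * h3 c d - (h3 a c * h3 d b + h3 a d * h3 c b))

/-- Total symmetrization of a rank-3 tensor on `ℝ³`. -/
def sym3 (T : Fin 3 → Fin 3 → Fin 3 → ℝ) (a b c : Fin 3) : ℝ :=
  (1/6) * ∑ σ : Equiv.Perm (Fin 3),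
    T (![a, b, c] (σ 0)) (![a, b, c] (σ 1)) (![a, b, c] (σ 2))

/-- Total symmetrization of a rank-4 tensor on `ℝ³`. -/
def sym43 (T : Fin 3 → Fin 3 → Fin 3 → Fin 3 → ℝ) (a b c d : Fin 3) : ℝ :=
  (1/24) * ∑ σ : Equiv.Perm (Fin 4),
    T (![a, b, c, d] (σ 0)) (![a, b, c, d] (σ 1)) (![a, b, c, d] (σ 2)) (![a, b, c, d] (σ 3))

/-
`W` is a sum of squares, so it vanishes exactly when `E` and `B` do, and then
`t_{ab}` and `t_{abcd}` vanish. Conversely, in three dimensions the contractions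
`t_a{}^a` and `t_{ab}{}^{ab}` both equal `W` (using `h_a{}^a = 3`), so the vanishing
of either tensor forces `W = 0`.
-/

theorem Wd_eq_zero_iff (E B : Mat3) :
    Wd E B = 0 ↔ (∀ a b, E a b = 0) ∧ (∀ a b, B a b = 0) := by
  have hnonneg : ∀ a b, 0 ≤ E a b * E a b + B a b * B a b := fun a b =>
    add_nonneg (mul_self_nonneg _) (mul_self_nonneg _)
  have hrow : ∀ a, 0 ≤ ∑ b, (E a b * E a b + B a b * B a b) := fun a =>
    Finset.sum_nonneg fun b _ => hnonneg a b
  simp only [Wd, Finset.sum_eq_zero_iff_of_nonneg fun a _ => hrow a,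
    Finset.sum_eq_zero_iff_of_nonneg fun b _ => hnonneg _ b, Finset.mem_univ, forall_const,
    mul_self_add_mul_self_eq_zero, forall_and]

theorem sum_td_diag (E B : Mat3) : ∑ a, td E B a a = Wd E B := by
  simp only [td, Wd, h3, Fin.sum_univ_three]
  norm_num
  ring

theorem sum_t4d_contract (E B : Mat3) : ∑ a, ∑ b, t4d E B a b a b = Wd E B := by
  simp only [t4d, td, Wd, h3, Fin.sum_univ_three]
  norm_num
  ring

theorem td_eq_zero_of_forall_eq_zero {E B : Mat3} (hE : ∀ a b, E a b = 0)
    (hB : ∀ a b, B a b = 0) (a b : Fin 3) : td E B a b = 0 := by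
  simp [td, Wd, hE, hB]

theorem t4d_eq_zero_of_forall_eq_zero {E B : Mat3} (hE : ∀ a b, E a b = 0)
    (hB : ∀ a b, B a b = 0) (a b c d : Fin 3) : t4d E B a b c d = 0 := by
  simp [t4d, td, Wd, hE, hB]

theorem bel_robinson_parts_vanishing_general
    (E B : Mat3) :
    ((∀ a b c d, t4d E B a b c d = 0) ↔ (∀ a b, td E B a b = 0)) ∧
    ((∀ a b, td E B a b = 0) ↔ Wd E B = 0) ∧
    (Wd E B = 0 ↔ ((∀ a b, E a b = 0) ∧ (∀ a b, B a b = 0))) := by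
  have hW := Wd_eq_zero_iff E B
  have htd : (∀ a b, td E B a b = 0) ↔ Wd E B = 0 :=
    ⟨fun h => by simp [← sum_td_diag, h],
      fun h => td_eq_zero_of_forall_eq_zero (hW.mp h).1 (hW.mp h).2⟩
  have ht4d : (∀ a b c d, t4d E B a b c d = 0) ↔ Wd E B = 0 :=
    ⟨fun h => by simp [← sum_t4d_contract, h],
      fun h => t4d_eq_zero_of_forall_eq_zero (hW.mp h).1 (hW.mp h).2⟩
  exact ⟨ht4d.trans htd.symm, htd, hW⟩

/-- The vanishing of `t_{abcd}`, of `t_{ab}`, of `W`, and of the pair `(E,B)` are all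
equivalent. -/
theorem bel_robinson_parts_vanishing
    (E B : Mat3)
    (hEsym : ∀ a b, E a b = E b a) (hEtr : (∑ a, E a a) = 0)
    (hBsym : ∀ a b, B a b = B b a) (hBtr : (∑ a, B a a) = 0) :
    ((∀ a b c d, t4d E B a b c d = 0) ↔ (∀ a b, td E B a b = 0)) ∧
    ((∀ a b, td E B a b = 0) ↔ Wd E B = 0) ∧
    (Wd E B = 0 ↔ ((∀ a b, E a b = 0) ∧ (∀ a b, B a b = 0))) :=
  bel_robinson_parts_vanishing_general E B
end
end

section
/- Let e, b be real numbers, not both zero, and let E_{ab} and B_{ab} be the Petrov type III canonical matrices E = [[0, e, −b], [e, 0, 0], [−b, 0, 0]] and B = [[0, b, e], [b, 0, 0], [e, 0, 0]]. Let W, 𝒫_a, t_{ab}, Q_{cdb}, t_{abcd} be the corresponding superenergy quantities. Then 𝒫_a ≠ 0, 𝒫_a 𝒫^a = W²/4, t_{ab} = ½ h_{ab} W − 2 𝒫_a 𝒫_b / W, Q_{abc} = h_{bc} 𝒫_a + h_{ac} 𝒫_b + h_{ab} 𝒫_c − 16 𝒫_a 𝒫_b 𝒫_c / W², and t_{abcd}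 = −64 𝒫_a 𝒫_b 𝒫_c 𝒫_d / W³ + (12/W) h_{(ab} 𝒫_c 𝒫_{d)}. -/
noncomputable section

/-!
The canonical type III pair is a duality rotation `E + iB = (e + ib) (E₀ + iB₀)` of the pair
`(E₀, B₀)` obtained for `e = 1, b = 0`. All superenergy quantities are quadratic in `(E, B)`, and
a duality rotation only multiplies them by `e² + b²`; since the claimed identities are homogeneous
of degree one in `(W, 𝒫, t, Q, t_{abcd})`, they transfer from `(E₀, B₀)`, where they are a finite
computation.
-/

theorem h3_comm (a b : Fin 3) : h3 a b = h3 b a := by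
  simp only [h3, eq_comm]

section DualityRotation

variable (e b : ℝ) (E B : Mat3)

theorem Wd_dualityRotation :
    Wd (e • E - b • B) (b • E + e • B) = (e ^ 2 + b ^ 2) * Wd E B := by
  simp only [Wd, Fin.sum_univ_three, Pi.add_apply, Pi.sub_apply, Pi.smul_apply, smul_eq_mul]
  ring

-- The `E ⊗ E` and `B ⊗ B` terms drop out and the two mixed terms coincide, by the
-- antisymmetry of `ε_a{}^{pq}` in `p, q`.
theorem Pd_dualityRotation :
    Pd (e • E - b • B) (b • E + e • B) = (e ^ 2 + b ^ 2) • Pd E B := by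
  ext a
  fin_cases a <;> simp [Pd, Fin.sum_univ_three, eps3] <;> ring

theorem td_dualityRotation (x y : Fin 3) :
    td (e • E - b • B) (b • E + e • B) x y = (e ^ 2 + b ^ 2) * td E B x y := by
  simp only [td, Wd_dualityRotation, Fin.sum_univ_three, Pi.add_apply, Pi.sub_apply,
    Pi.smul_apply, smul_eq_mul]
  ring

theorem Qd_dualityRotation (x y z : Fin 3) :
    Qd (e • E - b • B) (b • E + e • B) x y z = (e ^ 2 + b ^ 2) * Qd E B x y z := by
  fin_cases z <;> simp [Qd, Pd_dualityRotation, Fin.sum_univ_three, eps3] <;> ring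

theorem t4d_dualityRotation (x y z w : Fin 3) :
    t4d (e • E - b • B) (b • E + e • B) x y z w = (e ^ 2 + b ^ 2) * t4d E B x y z w := by
  simp only [t4d, td_dualityRotation, Wd_dualityRotation, Pi.add_apply, Pi.sub_apply,
    Pi.smul_apply, smul_eq_mul]
  ring

end DualityRotation

open Equiv in
theorem sum_perm_fin_succ {M : Type*} [AddCommMonoid M] {n : ℕ} (f : Perm (Fin (n + 1)) → M) :
    ∑ σ, f σ = ∑ p, ∑ τ : Perm (Fin n), f (Perm.decomposeFin.symm (p, τ)) := by
  rw [← Perm.decomposeFin.symm.sum_comp, Fintype.sum_prod_type]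

open Equiv in
theorem decomposeFin_symm_apply_two {n : ℕ} (e : Perm (Fin (n + 2))) (p : Fin (n + 3)) :
    Perm.decomposeFin.symm (p, e) 2 = swap 0 p (e 1).succ :=
  Perm.decomposeFin_symm_apply_succ e p 1

open Equiv in
theorem decomposeFin_symm_apply_three {n : ℕ} (e : Perm (Fin (n + 3))) (p : Fin (n + 4)) :
    Perm.decomposeFin.symm (p, e) 3 = swap 0 p (e 2).succ :=
  Perm.decomposeFin_symm_apply_succ e p 2

theorem sym43_metric_mul_mul (P : Fin 3 → ℝ) (a b c d : Fin 3) :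
    sym43 (fun p q r s => h3 p q * P r * P s) a b c d =
      (1 / 6) * (h3 a b * P c * P d + h3 a c * P b * P d + h3 a d * P b * P c
        + h3 c d * P a * P b + h3 b d * P a * P c + h3 b c * P a * P d) := by
  simp only [sym43, sum_perm_fin_succ, Fintype.sum_unique, Equiv.Perm.decomposeFin_symm_apply_zero,
    Equiv.Perm.decomposeFin_symm_apply_one, decomposeFin_symm_apply_two,
    decomposeFin_symm_apply_three]
  simp [Fin.sum_univ_succ, Equiv.swap_apply_def, h3_comm b a, h3_comm c a, h3_comm d a,
    h3_comm c b, h3_comm d b, h3_comm d c]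
  ring

def typeIIIE : Mat3 := fun x y => !![0, 1, 0; 1, 0, 0; 0, 0, 0] x y

def typeIIIB : Mat3 := fun x y => !![0, 0, 1; 0, 0, 0; 1, 0, 0] x y

theorem Wd_typeIII : Wd typeIIIE typeIIIB = 4 := by
  simp [Wd, typeIIIE, typeIIIB, Fin.sum_univ_three]
  norm_num

theorem Pd_typeIII : Pd typeIIIE typeIIIB = ![-2, 0, 0] := by
  ext a
  fin_cases a <;> simp [Pd, typeIIIE, typeIIIB, Fin.sum_univ_three, eps3]

theorem td_typeIII (x y : Fin 3) :
    td typeIIIE typeIIIB x y = 2 * h3 x y - 2 * h3 x 0 * h3 y 0 := by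
  fin_cases x <;> fin_cases y <;>
    simp [td, Wd_typeIII, typeIIIE, typeIIIB, h3, Fin.sum_univ_three]
  all_goals norm_num

def SuperenergyCanonicalForm (E B : Mat3) : Prop :=
    Pd E B ≠ 0 ∧
    (∑ a, Pd E B a * Pd E B a) = (Wd E B) ^ 2 / 4 ∧
    (∀ x y, td E B x y = (1/2) * h3 x y * Wd E B - 2 * Pd E B x * Pd E B y / Wd E B) ∧
    (∀ x y z, Qd E B x y z =
      h3 y z * Pd E B x + h3 x z * Pd E B y + h3 x y * Pd E B z
        - 16 * Pd E B x * Pd E B y * Pd E B z / (Wd E B) ^ 2) ∧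
    (∀ x y z w, t4d E B x y z w =
      -64 * Pd E B x * Pd E B y * Pd E B z * Pd E B w / (Wd E B) ^ 3
        + (12 / Wd E B) * sym43 (fun p q r s => h3 p q * Pd E B r * Pd E B s) x y z w)

namespace SuperenergyCanonicalForm

variable {E B : Mat3}

theorem Wd_ne_zero (h : SuperenergyCanonicalForm E B) : Wd E B ≠ 0 := by
  intro hW
  have hP := h.2.1
  rw [hW, zero_pow two_ne_zero, zero_div,
    Finset.sum_eq_zero_iff_of_nonneg fun a _ => mul_self_nonneg (Pd E B a)] at hP
  exact h.1 (funext fun a => mul_self_eq_zero.mp (hP a (Finset.mem_univ a)))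

theorem dualityRotation (h : SuperenergyCanonicalForm E B) {e b : ℝ} (hk : e ^ 2 + b ^ 2 ≠ 0) :
    SuperenergyCanonicalForm (e • E - b • B) (b • E + e • B) := by
  have hW := h.Wd_ne_zero
  obtain ⟨hP, hPP, ht, hQ, ht4⟩ := h
  refine ⟨?_, ?_, fun x y => ?_, fun x y z => ?_, fun x y z w => ?_⟩
  · rw [Pd_dualityRotation]
    exact smul_ne_zero hk hP
  · simp only [Pd_dualityRotation, Wd_dualityRotation, Pi.smul_apply, smul_eq_mul]
    rw [mul_pow, mul_div_assoc, ← hPP, Finset.mul_sum]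
    exact Finset.sum_congr rfl fun _ _ => by ring
  · rw [td_dualityRotation, ht, Pd_dualityRotation, Wd_dualityRotation]
    simp only [Pi.smul_apply, smul_eq_mul]
    field_simp
  · rw [Qd_dualityRotation, hQ, Pd_dualityRotation, Wd_dualityRotation]
    simp only [Pi.smul_apply, smul_eq_mul]
    field_simp
  · rw [t4d_dualityRotation, ht4, Pd_dualityRotation, Wd_dualityRotation, sym43_metric_mul_mul,
      sym43_metric_mul_mul]
    simp only [Pi.smul_apply, smul_eq_mul]
    field_simp

end SuperenergyCanonicalForm

theorem superenergyCanonicalForm_typeIII : SuperenergyCanonicalForm typeIIIE typeIIIB := by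
  refine ⟨?_, ?_, fun x y => ?_, fun x y z => ?_, fun x y z w => ?_⟩
  · rw [Pd_typeIII]
    intro h
    simpa using congrFun h 0
  · simp [Pd_typeIII, Wd_typeIII, Fin.sum_univ_three]
    norm_num
  · rw [td_typeIII, Pd_typeIII, Wd_typeIII]
    fin_cases x <;> fin_cases y <;> simp [h3] <;> norm_num
  · rw [Pd_typeIII, Wd_typeIII]
    fin_cases x <;> fin_cases y <;> fin_cases z <;>
      simp [Qd, Pd_typeIII, typeIIIE, typeIIIB, h3, eps3, Int.sign_eq_one_of_pos,
        Fin.sum_univ_three]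
    all_goals norm_num
  · rw [sym43_metric_mul_mul]
    simp only [t4d, td_typeIII, Wd_typeIII, Pd_typeIII]
    fin_cases x <;> fin_cases y <;> fin_cases z <;> fin_cases w <;>
      simp [typeIIIE, typeIIIB, h3] <;> norm_num

theorem typeIII_electric_eq (e b : ℝ) :
    (fun x y => !![0, e, -b; e, 0, 0; -b, 0, 0] x y : Mat3) = e • typeIIIE - b • typeIIIB := by
  ext x y
  fin_cases x <;> fin_cases y <;> simp [typeIIIE, typeIIIB]

theorem typeIII_magnetic_eq (e b : ℝ) :
    (fun x y => !![0, b, e; b, 0, 0; e, 0, 0] x y : Mat3) = b • typeIIIE + e • typeIIIB := by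
  ext x y
  fin_cases x <;> fin_cases y <;> simp [typeIIIE, typeIIIB]

/-- Canonical forms of the Bel-Robinson spatial parts for Petrov type III. -/
theorem petrov_type_III_canonical_superenergy
    (e b : ℝ) (hne : ¬(e = 0 ∧ b = 0))
    (E B : Mat3)
    (hE : E = fun x y => !![0, e, -b; e, 0, 0; -b, 0, 0] x y)
    (hB : B = fun x y => !![0, b, e; b, 0, 0; e, 0, 0] x y) :
    Pd E B ≠ 0 ∧
    (∑ a, Pd E B a * Pd E B a) = (Wd E B) ^ 2 / 4 ∧
    (∀ x y, td E B x y = (1/2) * h3 x y * Wd E B - 2 * Pd E B x * Pd E B y / Wd E B) ∧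
    (∀ x y z, Qd E B x y z =
      h3 y z * Pd E B x + h3 x z * Pd E B y + h3 x y * Pd E B z
        - 16 * Pd E B x * Pd E B y * Pd E B z / (Wd E B) ^ 2) ∧
    (∀ x y z w, t4d E B x y z w =
      -64 * Pd E B x * Pd E B y * Pd E B z * Pd E B w / (Wd E B) ^ 3
        + (12 / Wd E B) * sym43 (fun p q r s => h3 p q * Pd E B r * Pd E B s) x y z w) := by
  have hk : e ^ 2 + b ^ 2 ≠ 0 := fun h => hne <| by
    obtain ⟨he, hb⟩ := (add_eq_zero_iff_of_nonneg (sq_nonneg e) (sq_nonneg b)).mp h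
    exact ⟨(pow_eq_zero_iff two_ne_zero).mp he, (pow_eq_zero_iff two_ne_zero).mp hb⟩
  rw [hE, hB, typeIII_electric_eq, typeIII_magnetic_eq]
  exact superenergyCanonicalForm_typeIII.dualityRotation hk
end
end
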